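/- Fix integers c_{jk} (1 ≤ j < k ≤ n) and ℓ_1,…,ℓ_n, and indices 1 ≤ j_0 < j_1 < ⋯ < j_s ≤ n with s ≥ 2. Assume: ℓ_{j_t} = 0 for 0 ≤ t ≤ s−1 and ℓ_{j_s} > 0; c_{j_0 j_1} = 2; c_{j_t j_{t+1}} = −1 for 1 ≤ t ≤ s−1 and c_{j_0 j_2} = −1; c_{j_p j_q} = 0 whenever 1 ≤ p < q ≤ s and q − p ≥ 2, and c_{j_0 j_q} = 0 for 3 ≤ q ≤ s. Define σ ∈ {+,−}^n by σ_p = − if p ∈ {j_0,…,j_s} and σ_p = + otherwise. Then m_{σ,j_1} = m_{σ,j_2} = ⋯ = m_{σ,j_s} = ℓ_{j_s} and m_{σ,j_0} = −ℓ_{j_s} < 0. -/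

import Mathlib

open Finset

/-- `A_j(x) = ℓ_j − Σ_{k>j} c_{jk} x_k` (for the last index the sum is empty). -/
noncomputable def GKA {n : ℕ} (c : Fin n → Fin n → ℤ) (ℓ : Fin n → ℤ)
    (j : Fin n) (x : Fin n → ℝ) : ℝ :=
  (ℓ j : ℝ) - ∑ k ∈ Finset.univ.filter (fun k : Fin n => j < k), (c j k : ℝ) * x k

/-- The Grossberg–Karshon twisted cube `C(c,ℓ)`. -/
noncomputable def GKcube {n : ℕ} (c : Fin n → Fin n → ℤ) (ℓ : Fin n → ℤ) :
    Set (Fin n → ℝ) :=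
  {x | ∀ j : Fin n, (GKA c ℓ j x < x j ∧ x j < 0) ∨ (0 ≤ x j ∧ x j ≤ GKA c ℓ j x)}

/-- `sgn(t) = 1` for `t < 0` and `−1` for `t ≥ 0`. -/
noncomputable def GKsgn (t : ℝ) : ℝ := if t < 0 then 1 else -1

open Classical in
/-- The density function `ρ`: `ρ(x) = (−1)^n ∏_k sgn(x_k)` on `C(c,ℓ)`, `0` elsewhere. -/
noncomputable def GKrho {n : ℕ} (c : Fin n → Fin n → ℤ) (ℓ : Fin n → ℤ)
    (x : Fin n → ℝ) : ℝ :=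
  if x ∈ GKcube c ℓ then (-1 : ℝ) ^ n * ∏ k : Fin n, GKsgn (x k) else 0

/-- `(C(c,ℓ), ρ)` is untwisted: `C(c,ℓ)` is closed, convex, the convex hull of a
finite set, and `ρ ≡ 1` on `C(c,ℓ)`.  "Twisted" is the negation of this. -/
noncomputable def GKUntwisted {n : ℕ} (c : Fin n → Fin n → ℤ) (ℓ : Fin n → ℤ) : Prop :=
  IsClosed (GKcube c ℓ) ∧ Convex ℝ (GKcube c ℓ) ∧
  (∃ S : Finset (Fin n → ℝ), GKcube c ℓ = convexHull ℝ (S : Set (Fin n → ℝ))) ∧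
  (∀ x ∈ GKcube c ℓ, GKrho c ℓ x = 1)

/-- The Cartier data `m_σ`, defined by downward recursion:
`m_{σ,k} = 0` if `σ_k = +` (encoded `false`), and
`m_{σ,k} = ℓ_k − Σ_{s>k} c_{ks} m_{σ,s}` if `σ_k = −` (encoded `true`). -/
def GKm {n : ℕ} (c : Fin n → Fin n → ℤ) (ℓ : Fin n → ℤ) (σ : Fin n → Bool)
    (k : Fin n) : ℤ :=
  if σ k then
    ℓ k - ∑ s ∈ (Finset.univ.filter fun s : Fin n => k < s).attach,
      c k s.1 * GKm c ℓ σ s.1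
  else 0
termination_by n - k.val
decreasing_by
  have h := s.2
  simp only [Finset.mem_filter, Finset.mem_univ, true_and, Fin.lt_def] at h
  omega

/-- `A` is the Cartan matrix of a complex semisimple Lie algebra of rank `r`,
i.e. a generalized Cartan matrix of finite type: diagonal entries `2`,
nonpositive off-diagonal entries, `A_{ab} = 0 ↔ A_{ba} = 0`, and `A` is
symmetrizable by positive rationals `d_a` with `(d_a A_{ab})` symmetric
positive definite. -/
def IsCartanMatrix {r : ℕ} (A : Matrix (Fin r) (Fin r) ℤ) : Prop :=
  (∀ a, A a a = 2) ∧
  (∀ a b, a ≠ b → A a b ≤ 0) ∧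
  (∀ a b, A a b = 0 ↔ A b a = 0) ∧
  (∃ d : Fin r → ℚ, (∀ a, 0 < d a) ∧
    (∀ a b, d a * (A a b : ℚ) = d b * (A b a : ℚ)) ∧
    (∀ x : Fin r → ℚ, x ≠ 0 → 0 < ∑ a, ∑ b, x a * d a * (A a b : ℚ) * x b))

/-- `(w_0, …, w_s)` is a diagram walk followed by the condition that the final
root appears in `λ`: a `λ`-walk.  (Successive entries are distinct and adjacent
in the Dynkin diagram, and `λ_{w_s} > 0`.) -/
def IsLambdaWalkSeq {r : ℕ} (A : Matrix (Fin r) (Fin r) ℤ) (lam : Fin r → ℤ)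
    {s : ℕ} (w : Fin (s + 1) → Fin r) : Prop :=
  (∀ t : Fin s, w t.castSucc ≠ w t.succ ∧ A (w t.castSucc) (w t.succ) < 0) ∧
  0 < lam (w (Fin.last s))

/-- `(w_0, w_1, …, w_s)` is a hesitant `λ`-walk: `s ≥ 1`, `w_0 = w_1`, the
walking component `(w_1, …, w_s)` is a diagram walk, and `λ_{w_s} > 0`. -/
def IsHesitantLambdaWalkSeq {r : ℕ} (A : Matrix (Fin r) (Fin r) ℤ)
    (lam : Fin r → ℤ) {s : ℕ} (w : Fin (s + 1) → Fin r) : Prop :=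
  1 ≤ s ∧ w 0 = w 1 ∧
  (∀ t : Fin s, 1 ≤ t.val →
    (w t.castSucc ≠ w t.succ ∧ A (w t.castSucc) (w t.succ) < 0)) ∧
  0 < lam (w (Fin.last s))

/-- The word `i = (i_1, …, i_n)` is hesitant-`λ`-walk-avoiding: no subword
(subsequence, given by a strictly increasing reindexing `j`) is a hesitant
`λ`-walk. -/
def HesitantLambdaWalkAvoiding {r n : ℕ} (A : Matrix (Fin r) (Fin r) ℤ)
    (lam : Fin r → ℤ) (i : Fin n → Fin r) : Prop :=
  ¬ ∃ (s : ℕ) (j : Fin (s + 1) → Fin n), StrictMono j ∧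
      IsHesitantLambdaWalkSeq A lam (i ∘ j)

/-- Minimality of a hesitant `λ`-walk `(w_0, …, w_s)`: the entries of the
walking component `w_1, …, w_s` are pairwise distinct, and if `s ≥ 2` then
`λ_{w_t} = 0` for `0 ≤ t ≤ s − 1`. -/
def MinimalHLW {r s : ℕ} (lam : Fin r → ℤ) (w : Fin (s + 1) → Fin r) : Prop :=
  (∀ p q : Fin (s + 1), 1 ≤ p.val → 1 ≤ q.val → w p = w q → p = q) ∧
  (2 ≤ s → ∀ t : Fin (s + 1), t.val ≤ s - 1 → lam (w t) = 0)

/-!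
Since `σ` is `+` off `{j_0, …, j_s}`, the recursion for `m_σ` only sees the indices `j_t`,
where the coefficient pattern is a path `j_1 — j_2 — ⋯ — j_s` with `j_0` attached to `j_1`
and `j_2`. Along the path, `m_{j_t} = 0 - (-1) m_{j_{t+1}}` propagates `m_{j_s} = ℓ_{j_s}` down
to `j_1`, and then `m_{j_0} = 0 - 2 ℓ_{j_s} + ℓ_{j_s} = -ℓ_{j_s}`.
-/

section GKm

variable {n : ℕ} (c : Fin n → Fin n → ℤ) (ℓ : Fin n → ℤ) (σ : Fin n → Bool)

lemma GKm_of_false {k : Fin n} (h : σ k = false) : GKm c ℓ σ k = 0 := by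
  rw [GKm, h, if_neg Bool.false_ne_true]

lemma GKm_of_true {k : Fin n} (h : σ k = true) :
    GKm c ℓ σ k = ℓ k - ∑ p ∈ Ioi k, c k p * GKm c ℓ σ p := by
  rw [GKm, if_pos h, sum_attach _ (fun p => c k p * GKm c ℓ σ p), filter_lt_eq_Ioi]

lemma GKm_comp_of_support {s : ℕ} {j : Fin (s + 1) → Fin n} (hj : StrictMono j)
    (hσ : ∀ p, σ p = true ↔ ∃ t, j t = p) (t : Fin (s + 1)) :
    GKm c ℓ σ (j t) = ℓ (j t) - ∑ u ∈ Ioi t, c (j t) (j u) * GKm c ℓ σ (j u) := by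
  rw [GKm_of_true c ℓ σ ((hσ _).2 ⟨t, rfl⟩)]
  congr 1
  refine (sum_subset (fun p hp => ?_) fun p hp hnp => ?_).symm.trans
    (sum_image fun u _ v _ h => hj.injective h)
  · obtain ⟨u, hu, rfl⟩ := mem_image.1 hp
    exact mem_Ioi.2 (hj (mem_Ioi.1 hu))
  · have hp_plus : σ p = false := by
      refine Bool.eq_false_iff.2 fun hp_minus => hnp ?_
      obtain ⟨u, rfl⟩ := (hσ p).1 hp_minus
      exact mem_image_of_mem _ (mem_Ioi.2 (hj.lt_iff_lt.1 (mem_Ioi.1 hp)))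
    rw [GKm_of_false c ℓ σ hp_plus, mul_zero]

end GKm

section UpperTriangular

variable {s : ℕ} {a : Fin (s + 1) → Fin (s + 1) → ℤ} {b m : Fin (s + 1) → ℤ}

lemma eq_sub_mul_of_forall_ne_eq_zero (hm : ∀ t, m t = b t - ∑ u ∈ Ioi t, a t u * m u)
    {t u : Fin (s + 1)} (htu : t < u) (ha : ∀ v, t < v → v ≠ u → a t v = 0) :
    m t = b t - a t u * m u := by
  rw [hm t, sum_eq_single_of_mem u (mem_Ioi.2 htu)
    fun v hv hvu => by rw [ha v (mem_Ioi.1 hv) hvu, zero_mul]]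

lemma eq_sub_mul_sub_mul_of_forall_ne_eq_zero
    (hm : ∀ t, m t = b t - ∑ u ∈ Ioi t, a t u * m u)
    {t u v : Fin (s + 1)} (htu : t < u) (htv : t < v) (huv : u ≠ v)
    (ha : ∀ w, t < w → w ≠ u → w ≠ v → a t w = 0) :
    m t = b t - a t u * m u - a t v * m v := by
  rw [hm t, sum_eq_add_of_mem u v (mem_Ioi.2 htu) (mem_Ioi.2 htv) huv
    fun w hw hwuv => by rw [ha w (mem_Ioi.1 hw) hwuv.1 hwuv.2, zero_mul], sub_add_eq_sub_sub]

lemma eq_last_of_path (hm : ∀ t, m t = b t - ∑ u ∈ Ioi t, a t u * m u)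
    (hb : ∀ t : Fin s, 1 ≤ t.val → b t.castSucc = 0)
    (hpath : ∀ t : Fin s, 1 ≤ t.val → a t.castSucc t.succ = -1)
    (hzero : ∀ p q : Fin (s + 1), 1 ≤ p.val → p.val + 2 ≤ q.val → a p q = 0) :
    ∀ t : Fin (s + 1), 1 ≤ t.val → m t = b (Fin.last s) := by
  intro t
  induction t using Fin.reverseInduction with
  | last =>
    intro _
    rw [hm, Ioi_eq_empty.2 fun v _ => Fin.le_last v, sum_empty, sub_zero]
  | cast i ih =>
    intro hi
    rw [Fin.val_castSucc] at hi
    have hsucc : m i.succ = b (Fin.last s) := ih (by rw [Fin.val_succ]; omega)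
    rw [eq_sub_mul_of_forall_ne_eq_zero hm Fin.castSucc_lt_succ fun v hv hvi => ?_,
      hb i hi, hpath i hi, hsucc]
    · ring
    · refine hzero _ _ hi ?_
      simp only [Fin.lt_def, Ne, Fin.ext_iff, Fin.val_castSucc, Fin.val_succ] at hv hvi ⊢
      omega

end UpperTriangular

/-- Simply-laced-type computation: for indices
`j_0 < j_1 < ⋯ < j_s` (`s ≥ 2`) with `ℓ_{j_t} = 0` for `t ≤ s−1`,
`ℓ_{j_s} > 0`, `c_{j_0 j_1} = 2`, `c_{j_t j_{t+1}} = −1` (`1 ≤ t ≤ s−1`),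
`c_{j_0 j_2} = −1`, and the remaining `c`'s among the `j`'s zero, and `σ`
equal to `−` exactly on `{j_0, …, j_s}`, one has
`m_{σ,j_1} = ⋯ = m_{σ,j_s} = ℓ_{j_s}` and `m_{σ,j_0} = −ℓ_{j_s} < 0`. -/
theorem statement13 {n : ℕ} (c : Fin n → Fin n → ℤ) (ℓ : Fin n → ℤ)
    (s : ℕ) (hs : 2 ≤ s) (j : Fin (s + 1) → Fin n) (hj : StrictMono j)
    (hl0 : ∀ t : Fin (s + 1), t.val ≤ s - 1 → ℓ (j t) = 0)
    (hls : 0 < ℓ (j (Fin.last s)))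
    (hc01 : c (j 0) (j ⟨1, by omega⟩) = 2)
    (hchain : ∀ t : Fin s, 1 ≤ t.val → c (j t.castSucc) (j t.succ) = -1)
    (hc02 : c (j 0) (j ⟨2, by omega⟩) = -1)
    (hzero : ∀ p q : Fin (s + 1), 1 ≤ p.val → p.val + 2 ≤ q.val →
      c (j p) (j q) = 0)
    (hzero0 : ∀ q : Fin (s + 1), 3 ≤ q.val → c (j 0) (j q) = 0)
    (σ : Fin n → Bool) (hσ : ∀ p, σ p = true ↔ ∃ t, j t = p) :
    (∀ t : Fin (s + 1), 1 ≤ t.val →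
      GKm c ℓ σ (j t) = ℓ (j (Fin.last s))) ∧
    GKm c ℓ σ (j 0) = - ℓ (j (Fin.last s)) ∧
    GKm c ℓ σ (j 0) < 0 := by
  have hm := GKm_comp_of_support c ℓ σ hj hσ
  have hpath : ∀ t : Fin (s + 1), 1 ≤ t.val → GKm c ℓ σ (j t) = ℓ (j (Fin.last s)) :=
    eq_last_of_path hm (fun t _ => hl0 _ (by rw [Fin.val_castSucc]; omega)) hchain hzero
  have h0 : GKm c ℓ σ (j 0) = -ℓ (j (Fin.last s)) := by
    rw [eq_sub_mul_sub_mul_of_forall_ne_eq_zero hm (u := ⟨1, by omega⟩) (v := ⟨2, by omega⟩)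
        (Fin.lt_def.2 one_pos) (Fin.lt_def.2 two_pos) (by simp [Fin.ext_iff])
        fun w hw hw1 hw2 => ?_,
      hl0 0 (by simp), hc01, hc02, hpath _ le_rfl, hpath _ one_le_two]
    · ring
    · refine hzero0 w ?_
      simp only [Fin.lt_def, Ne, Fin.ext_iff, Fin.val_zero] at hw hw1 hw2
      omega
  exact ⟨hpath, h0, h0 ▸ neg_neg_of_pos hls⟩
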